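/- arXiv:2603.29253 — 4 statements merged into one kernel-verified Lean document; each statement's English description precedes it below -/
import Mathlib

section
/- Fix an integer N ≥ 2. For j ∈ ℤ set u_j = (cos(π(j−1)/N), sin(π(j−1)/N)) ∈ ℝ². Given v = (v₁,…,v_N) ∈ ℝ^N, extend indices periodically by v_{j+N} = v_j, and define the star-shaped polygon P_v := ⋃_{j=1}^{2N} conv{(0,0), e^{v_j}·u_j, e^{v_{j+1}}·u_{j+1}} (indices mod 2N). Then for all v, w ∈ ℝ^N and all C ≥ 1: P_v ⊆ C·P_w and P_w ⊆ C·P_v hold if and only if ln C ≥ max_{1≤j≤N} |v_j − w_j|. Consequently, the inclusion distance d_I(P_v, P_w) := inf{ln C : C ≥ 1, P_v ⊆ C·P_w, P_w ⊆ C·P_v} equals ‖v − w‖_∞, so v ↦ P_v is an isometric embedding of (ℝ^N, ‖·‖_∞) into the set of star-shaped domains of ℝ² equipped with d_I. -/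
open Set
open scoped Pointwise

noncomputable section

/-- The unit vector `u_j = (cos(π(j−1)/N), sin(π(j−1)/N))` in `ℝ²`, for `j ∈ ℤ`. -/
def starDir (N : ℕ) (j : ℤ) : ℝ × ℝ :=
  (Real.cos (Real.pi * (j - 1) / N), Real.sin (Real.pi * (j - 1) / N))

/-- The star-shaped polygon `P_v := ⋃_{j=1}^{2N} conv{0, e^{v_j}u_j, e^{v_{j+1}}u_{j+1}}`,
where `v ∈ ℝ^N` is indexed by `ZMod N` (so the periodic extension `v_{j+N} = v_j` is
automatic). -/
def starPolygon (N : ℕ) (v : ZMod N → ℝ) : Set (ℝ × ℝ) :=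
  ⋃ j ∈ Finset.Icc (1 : ℤ) (2 * N),
    convexHull ℝ
      {((0 : ℝ), (0 : ℝ)),
        Real.exp (v (j : ZMod N)) • starDir N j,
        Real.exp (v ((j + 1 : ℤ) : ZMod N)) • starDir N (j + 1)}

lemma mem_tri_iff {y z p : ℝ × ℝ} :
    p ∈ convexHull ℝ {((0:ℝ), (0:ℝ)), y, z} ↔
      ∃ β γ : ℝ, 0 ≤ β ∧ 0 ≤ γ ∧ β + γ ≤ 1 ∧ p = β • y + γ • z := by
  have h00 : ((0:ℝ), (0:ℝ)) = (0 : ℝ × ℝ) := rfl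
  constructor
  · intro hp
    rw [h00, convexHull_insert ⟨y, by simp⟩, mem_convexJoin] at hp
    obtain ⟨a, ha, b, hb, hseg⟩ := hp
    rw [mem_singleton_iff] at ha
    rw [convexHull_pair] at hb
    obtain ⟨c, d, hc, hd, hcd, rfl⟩ := hb
    obtain ⟨s, t, hs, ht, hst, hx⟩ := hseg
    subst ha
    refine ⟨t * c, t * d, by positivity, by positivity, by nlinarith, ?_⟩
    rw [← hx]
    simp [smul_add, smul_smul]
  · rintro ⟨β, γ, hβ, hγ, hβγ, rfl⟩
    have hK : Convex ℝ (convexHull ℝ {((0:ℝ), (0:ℝ)), y, z}) := convex_convexHull ℝ _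
    have h0 : (0 : ℝ × ℝ) ∈ convexHull ℝ {((0:ℝ), (0:ℝ)), y, z} :=
      subset_convexHull ℝ _ (by rw [h00]; exact mem_insert _ _)
    have hy : y ∈ convexHull ℝ {((0:ℝ), (0:ℝ)), y, z} :=
      subset_convexHull ℝ _ (by simp)
    have hz : z ∈ convexHull ℝ {((0:ℝ), (0:ℝ)), y, z} :=
      subset_convexHull ℝ _ (by simp)
    rcases eq_or_lt_of_le (by positivity : (0:ℝ) ≤ β + γ) with hs | hs
    · have hβ0 : β = 0 := by linarith [abs_nonneg γ]
      have hγ0 : γ = 0 := by linarith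
      simpa [hβ0, hγ0] using h0
    · set s := β + γ with hsdef
      have hq : (β / s) • y + (γ / s) • z ∈ convexHull ℝ {((0:ℝ), (0:ℝ)), y, z} :=
        hK hy hz (by positivity) (by positivity) (by field_simp; linarith)
      have := hK h0 hq (by linarith : (0:ℝ) ≤ 1 - s) (le_of_lt hs) (by ring)
      have heq : (1 - s) • (0 : ℝ × ℝ) + s • ((β / s) • y + (γ / s) • z) = β • y + γ • z := by
        rw [smul_zero, zero_add, smul_add, smul_smul, smul_smul,
          mul_div_cancel₀ _ (ne_of_gt hs), mul_div_cancel₀ _ (ne_of_gt hs)]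
      rwa [heq] at this

lemma sin_nonneg_emod (N : ℕ) (hN : 2 ≤ N) (m : ℤ)
    (h : 0 ≤ Real.sin (Real.pi * m / N)) : m % (2 * N) ≤ N := by
  by_contra hr
  push_neg at hr
  set r := m % (2 * (N:ℤ)) with hrdef
  have h2N : (0:ℤ) < 2 * N := by omega
  have hr0 : 0 ≤ r := Int.emod_nonneg _ (ne_of_gt h2N)
  have hrlt : r < 2 * N := Int.emod_lt_of_pos _ h2N
  obtain ⟨q, hq⟩ : ∃ q, m = 2 * N * q + r :=
    ⟨m / (2 * N), (Int.mul_ediv_add_emod m (2 * N)).symm⟩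
  have hNpos : (0:ℝ) < N := by exact_mod_cast (by omega : 0 < N)
  have harg : Real.pi * m / N = Real.pi * r / N + q * (2 * Real.pi) := by
    rw [hq]; push_cast; field_simp; ring
  rw [harg, Real.sin_add_int_mul_two_pi] at h
  have hNr : (N:ℝ) < r := by exact_mod_cast hr
  have hr2N : (r:ℝ) < 2 * N := by exact_mod_cast hrlt
  have h1 : Real.pi < Real.pi * r / N := by
    rw [lt_div_iff₀ hNpos]; nlinarith [Real.pi_pos]
  have h2 : Real.pi * r / N < 2 * Real.pi := by
    rw [div_lt_iff₀ hNpos]; nlinarith [Real.pi_pos]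
  have hpos := Real.sin_pos_of_pos_of_lt_pi (x := Real.pi * r / N - Real.pi)
    (by linarith) (by linarith)
  rw [Real.sin_sub_pi] at hpos
  linarith

lemma emod_zero_or_one (N : ℕ) (hN : 2 ≤ N) (m : ℤ)
    (h1 : m % (2 * N) ≤ N) (h2 : (1 - m) % (2 * N) ≤ N) :
    (2 * (N:ℤ)) ∣ m ∨ (2 * (N:ℤ)) ∣ (m - 1) := by
  have h2N : (0:ℤ) < 2 * N := by omega
  set r := m % (2 * (N:ℤ)) with hrdef
  have hr0 : 0 ≤ r := Int.emod_nonneg _ (ne_of_gt h2N)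
  obtain ⟨q, hq⟩ : ∃ q, m = 2 * N * q + r :=
    ⟨m / (2 * N), (Int.mul_ediv_add_emod m (2 * N)).symm⟩
  have e : (1 - m) % (2 * N) = (1 - r) % (2 * N) := by
    conv_lhs => rw [show (1:ℤ) - m = 1 - r + 2 * N * (-q) from by rw [hq]; ring]
    rw [Int.add_mul_emod_self_left]
  rcases eq_or_ne r 0 with h0 | h0
  · exact Or.inl (Int.dvd_of_emod_eq_zero h0)
  rcases eq_or_ne r 1 with hone | hone
  · exact Or.inr ⟨q, by rw [hq, hone]; ring⟩
  exfalso
  have hr2 : 2 ≤ r := by omega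
  have e2 : (1 - r) % (2 * N) = 1 - r + 2 * N := by
    conv_lhs => rw [show (1:ℤ) - r = (1 - r + 2 * N) + 2 * N * (-1) from by ring]
    rw [Int.add_mul_emod_self_left, Int.emod_eq_of_lt (by omega) (by omega)]
  have : 1 - r + 2 * (N:ℤ) ≤ N := by rw [← e2, ← e]; exact h2
  omega

lemma radial_bound (N : ℕ) (hN : 2 ≤ N) (w : ZMod N → ℝ) (j : ℤ) {t : ℝ} (ht : 0 ≤ t)
    (h : t • starDir N j ∈ starPolygon N w) : t ≤ Real.exp (w (j : ZMod N)) := by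
  have hNpos : (0:ℝ) < N := by exact_mod_cast (by omega : 0 < N)
  rcases ht.eq_or_lt with heq | htpos
  · rw [← heq]; exact (Real.exp_pos _).le
  simp only [starPolygon, mem_iUnion, exists_prop] at h
  obtain ⟨k, hk, hmem⟩ := h
  rw [mem_tri_iff] at hmem
  obtain ⟨β, γ, hβ, hγ, hβγ, hp⟩ := hmem
  set E1 := Real.exp (w ((k : ℤ) : ZMod N)) with hE1
  set E2 := Real.exp (w ((k + 1 : ℤ) : ZMod N)) with hE2
  have hE1pos : 0 < E1 := Real.exp_pos _
  have hE2pos : 0 < E2 := Real.exp_pos _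
  simp only [starDir, Prod.smul_mk, smul_eq_mul, Prod.mk_add_mk, Prod.mk.injEq] at hp
  obtain ⟨h1, h2⟩ := hp
  push_cast at h1 h2
  rw [show Real.pi * ((k:ℝ) + 1 - 1) / (N:ℝ) = Real.pi * (k:ℝ) / N from by ring] at h1 h2
  -- abbreviations
  have hsinpos : 0 < Real.sin (Real.pi / N) := by
    apply Real.sin_pos_of_pos_of_lt_pi (by positivity)
    rw [div_lt_iff₀ hNpos]
    have h2' := mul_le_mul_of_nonneg_left (by exact_mod_cast hN : (2:ℝ) ≤ N) Real.pi_pos.le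
    linarith [Real.pi_pos]
  have hB' : (β * E1) * Real.sin (Real.pi / N)
      = t * Real.sin (Real.pi * ((k:ℝ) + 1 - j) / N) := by
    rw [show Real.pi / (N:ℝ) = Real.pi * (k:ℝ) / N - Real.pi * ((k:ℝ) - 1) / N from by
        rw [div_sub_div_same]; congr 1; ring,
      show Real.pi * ((k:ℝ) + 1 - j) / N
          = Real.pi * (k:ℝ) / N - Real.pi * ((j:ℝ) - 1) / N from by
        rw [div_sub_div_same]; congr 1; ring,
      Real.sin_sub, Real.sin_sub]
    linear_combination Real.cos (Real.pi * (k:ℝ) / N) * h2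
      - Real.sin (Real.pi * (k:ℝ) / N) * h1
  have hG' : (γ * E2) * Real.sin (Real.pi / N)
      = t * Real.sin (Real.pi * ((j:ℝ) - k) / N) := by
    rw [show Real.pi / (N:ℝ) = Real.pi * (k:ℝ) / N - Real.pi * ((k:ℝ) - 1) / N from by
        rw [div_sub_div_same]; congr 1; ring,
      show Real.pi * ((j:ℝ) - k) / N
          = Real.pi * ((j:ℝ) - 1) / N - Real.pi * ((k:ℝ) - 1) / N from by
        rw [div_sub_div_same]; congr 1; ring,
      Real.sin_sub, Real.sin_sub]
    linear_combination Real.sin (Real.pi * ((k:ℝ) - 1) / N) * h1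
      - Real.cos (Real.pi * ((k:ℝ) - 1) / N) * h2
  have hs1 : 0 ≤ Real.sin (Real.pi * ((k:ℝ) + 1 - j) / N) := by
    have h0 : 0 ≤ t * Real.sin (Real.pi * ((k:ℝ) + 1 - j) / N) := by
      rw [← hB']; positivity
    exact (mul_nonneg_iff_of_pos_left htpos).mp h0
  have hs2 : 0 ≤ Real.sin (Real.pi * ((j:ℝ) - k) / N) := by
    have h0 : 0 ≤ t * Real.sin (Real.pi * ((j:ℝ) - k) / N) := by
      rw [← hG']; positivity
    exact (mul_nonneg_iff_of_pos_left htpos).mp h0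
  have hm1 := sin_nonneg_emod N hN (k + 1 - j) (by push_cast; exact hs1)
  have hm2 := sin_nonneg_emod N hN (j - k) (by push_cast; exact hs2)
  rcases emod_zero_or_one N hN (j - k) hm2
      (by rw [show (1 : ℤ) - (j - k) = k + 1 - j from by ring]; exact hm1) with hd | hd
  · -- j ≡ k mod 2N
    obtain ⟨l, hl⟩ := hd
    have hjk : ((k : ℤ) : ZMod N) = ((j : ℤ) : ZMod N) := by
      rw [ZMod.intCast_eq_intCast_iff]
      exact (Int.modEq_iff_dvd.mpr ⟨2 * l, by rw [hl]; ring⟩)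
    have hlr : (j : ℝ) - k = 2 * N * l := by exact_mod_cast hl
    have hsin0 : Real.sin (Real.pi * ((j:ℝ) - k) / N) = 0 := by
      rw [show Real.pi * ((j:ℝ) - k) / (N:ℝ) = ((2 * l : ℤ) : ℝ) * Real.pi from by
        field_simp; push_cast; linear_combination hlr]
      exact Real.sin_int_mul_pi _
    have hγ0 : γ = 0 := by
      have : (γ * E2) * Real.sin (Real.pi / N) = 0 := by rw [hG', hsin0, mul_zero]
      have h0 : γ * E2 = 0 := by
        rcases mul_eq_zero.mp this with h | h
        · exact h
        · exact absurd h (ne_of_gt hsinpos)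
      rcases mul_eq_zero.mp h0 with h | h
      · exact h
      · exact absurd h (ne_of_gt hE2pos)
    have hcos : Real.cos (Real.pi * ((k:ℝ) - 1) / N) = Real.cos (Real.pi * ((j:ℝ) - 1) / N) := by
      rw [show Real.pi * ((k:ℝ) - 1) / N
          = Real.pi * ((j:ℝ) - 1) / N - (l : ℤ) * (2 * Real.pi) from by
        field_simp; linear_combination -hlr]
      exact Real.cos_sub_int_mul_two_pi _ _
    have hsin : Real.sin (Real.pi * ((k:ℝ) - 1) / N) = Real.sin (Real.pi * ((j:ℝ) - 1) / N) := by
      rw [show Real.pi * ((k:ℝ) - 1) / N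
          = Real.pi * ((j:ℝ) - 1) / N - (l : ℤ) * (2 * Real.pi) from by
        field_simp; linear_combination -hlr]
      exact Real.sin_sub_int_mul_two_pi _ _
    rw [hγ0] at h1 h2
    rw [hcos] at h1
    rw [hsin] at h2
    have e1 : (t - β * E1) * Real.cos (Real.pi * ((j:ℝ) - 1) / N) = 0 := by
      linear_combination h1
    have e2 : (t - β * E1) * Real.sin (Real.pi * ((j:ℝ) - 1) / N) = 0 := by
      linear_combination h2
    have hsq : (t - β * E1) ^ 2 = 0 := by
      linear_combination (Real.cos (Real.pi * ((j:ℝ) - 1) / N) * (t - β * E1)) * e1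
        + (Real.sin (Real.pi * ((j:ℝ) - 1) / N) * (t - β * E1)) * e2
        - (t - β * E1) ^ 2 * (Real.sin_sq_add_cos_sq (Real.pi * ((j:ℝ) - 1) / N))
    have ht_eq : t = β * E1 := by
      have := pow_eq_zero_iff (n := 2) (by norm_num) |>.mp hsq
      linarith [sub_eq_zero.mp this]
    rw [← hjk]
    nlinarith [hE1pos]
  · -- j ≡ k + 1 mod 2N
    obtain ⟨l, hl⟩ := hd
    have hjk : ((k + 1 : ℤ) : ZMod N) = ((j : ℤ) : ZMod N) := by
      rw [ZMod.intCast_eq_intCast_iff]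
      exact (Int.modEq_iff_dvd.mpr ⟨2 * l, by linear_combination hl⟩)
    have hlr : (j : ℝ) - k - 1 = 2 * N * l := by exact_mod_cast hl
    have hsin0 : Real.sin (Real.pi * ((k:ℝ) + 1 - j) / N) = 0 := by
      rw [show Real.pi * ((k:ℝ) + 1 - j) / (N:ℝ) = ((-(2 * l) : ℤ) : ℝ) * Real.pi from by
        field_simp; push_cast; linear_combination -hlr]
      exact Real.sin_int_mul_pi _
    have hβ0 : β = 0 := by
      have : (β * E1) * Real.sin (Real.pi / N) = 0 := by rw [hB', hsin0, mul_zero]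
      have h0 : β * E1 = 0 := by
        rcases mul_eq_zero.mp this with h | h
        · exact h
        · exact absurd h (ne_of_gt hsinpos)
      rcases mul_eq_zero.mp h0 with h | h
      · exact h
      · exact absurd h (ne_of_gt hE1pos)
    have hcos : Real.cos (Real.pi * (k:ℝ) / N) = Real.cos (Real.pi * ((j:ℝ) - 1) / N) := by
      rw [show Real.pi * (k:ℝ) / N
          = Real.pi * ((j:ℝ) - 1) / N - (l : ℤ) * (2 * Real.pi) from by
        field_simp; linear_combination -hlr]
      exact Real.cos_sub_int_mul_two_pi _ _
    have hsin : Real.sin (Real.pi * (k:ℝ) / N) = Real.sin (Real.pi * ((j:ℝ) - 1) / N) := by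
      rw [show Real.pi * (k:ℝ) / N
          = Real.pi * ((j:ℝ) - 1) / N - (l : ℤ) * (2 * Real.pi) from by
        field_simp; linear_combination -hlr]
      exact Real.sin_sub_int_mul_two_pi _ _
    rw [hβ0] at h1 h2
    rw [hcos] at h1
    rw [hsin] at h2
    have e1 : (t - γ * E2) * Real.cos (Real.pi * ((j:ℝ) - 1) / N) = 0 := by
      linear_combination h1
    have e2 : (t - γ * E2) * Real.sin (Real.pi * ((j:ℝ) - 1) / N) = 0 := by
      linear_combination h2
    have hsq : (t - γ * E2) ^ 2 = 0 := by
      linear_combination (Real.cos (Real.pi * ((j:ℝ) - 1) / N) * (t - γ * E2)) * e1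
        + (Real.sin (Real.pi * ((j:ℝ) - 1) / N) * (t - γ * E2)) * e2
        - (t - γ * E2) ^ 2 * (Real.sin_sq_add_cos_sq (Real.pi * ((j:ℝ) - 1) / N))
    have ht_eq : t = γ * E2 := by
      have := pow_eq_zero_iff (n := 2) (by norm_num) |>.mp hsq
      linarith [sub_eq_zero.mp this]
    rw [← hjk]
    nlinarith [hE2pos]


lemma incl_of_le (N : ℕ) (v w : ZMod N → ℝ) (C : ℝ) (hC : 1 ≤ C)
    (h : ∀ j : ZMod N, v j - w j ≤ Real.log C) :
    starPolygon N v ⊆ C • starPolygon N w := by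
  have hC0 : (0:ℝ) < C := lt_of_lt_of_le one_pos hC
  have hkey : ∀ a : ZMod N, Real.exp (v a) ≤ C * Real.exp (w a) := by
    intro a
    have h' : Real.exp (v a) ≤ Real.exp (Real.log C + w a) :=
      Real.exp_le_exp.mpr (by linarith [h a])
    rwa [Real.exp_add, Real.exp_log hC0] at h'
  intro x hx
  simp only [starPolygon, mem_iUnion, exists_prop] at hx
  obtain ⟨k, hk, hmem⟩ := hx
  have hsub : convexHull ℝ {((0:ℝ),(0:ℝ)), Real.exp (v ((k : ℤ) : ZMod N)) • starDir N k,
      Real.exp (v ((k + 1 : ℤ) : ZMod N)) • starDir N (k + 1)} ⊆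
      C • convexHull ℝ {((0:ℝ),(0:ℝ)), Real.exp (w ((k : ℤ) : ZMod N)) • starDir N k,
      Real.exp (w ((k + 1 : ℤ) : ZMod N)) • starDir N (k + 1)} := by
    intro p hp
    rw [mem_tri_iff] at hp
    obtain ⟨β, γ, hβ, hγ, hβγ, rfl⟩ := hp
    rw [← convexHull_smul, smul_set_insert, smul_set_insert, smul_set_singleton,
      show C • ((0:ℝ),(0:ℝ)) = ((0:ℝ),(0:ℝ)) from by
        show C • (0 : ℝ × ℝ) = (0 : ℝ × ℝ); rw [smul_zero],
      smul_smul, smul_smul, mem_tri_iff]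
    refine ⟨β * Real.exp (v ((k : ℤ) : ZMod N)) / (C * Real.exp (w ((k : ℤ) : ZMod N))),
      γ * Real.exp (v ((k + 1 : ℤ) : ZMod N)) / (C * Real.exp (w ((k + 1 : ℤ) : ZMod N))),
      by positivity, by positivity, ?_, ?_⟩
    · have e1 : β * Real.exp (v ((k : ℤ) : ZMod N)) / (C * Real.exp (w ((k : ℤ) : ZMod N))) ≤ β := by
        rw [div_le_iff₀ (by positivity)]
        nlinarith [hkey ((k : ℤ) : ZMod N), Real.exp_pos (v ((k : ℤ) : ZMod N))]
      have e2 : γ * Real.exp (v ((k + 1 : ℤ) : ZMod N)) /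
          (C * Real.exp (w ((k + 1 : ℤ) : ZMod N))) ≤ γ := by
        rw [div_le_iff₀ (by positivity)]
        nlinarith [hkey ((k + 1 : ℤ) : ZMod N), Real.exp_pos (v ((k + 1 : ℤ) : ZMod N))]
      linarith
    · rw [smul_smul, smul_smul, smul_smul, smul_smul,
        div_mul_cancel₀ _ (by positivity : C * Real.exp (w ((k : ℤ) : ZMod N)) ≠ 0),
        div_mul_cancel₀ _ (by positivity : C * Real.exp (w ((k + 1 : ℤ) : ZMod N)) ≠ 0)]
  exact Set.smul_set_mono (fun y hy => mem_iUnion₂.mpr ⟨k, hk, hy⟩) (hsub hmem)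

lemma sub_le_log_of_incl (N : ℕ) (hN : 2 ≤ N) (v w : ZMod N → ℝ) (C : ℝ) (hC : 1 ≤ C)
    (h : starPolygon N v ⊆ C • starPolygon N w) :
    ∀ j : ZMod N, v j - w j ≤ Real.log C := by
  haveI : NeZero N := ⟨by omega⟩
  have hC0 : (0:ℝ) < C := lt_of_lt_of_le one_pos hC
  intro j'
  obtain ⟨jz, hjz1, hjz2, hjzc⟩ :
      ∃ jz : ℤ, 1 ≤ jz ∧ jz ≤ 2 * N ∧ ((jz : ℤ) : ZMod N) = j' := by
    rcases eq_or_ne j' 0 with rfl | hne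
    · exact ⟨(N : ℤ), by exact_mod_cast (by omega : 1 ≤ N), by omega, by
        push_cast; exact ZMod.natCast_self N⟩
    · refine ⟨(j'.val : ℤ), ?_, ?_, ?_⟩
      · have hv0 : j'.val ≠ 0 := by
          intro h0; exact hne ((ZMod.val_eq_zero j').mp h0)
        omega
      · have := ZMod.val_lt j'; omega
      · push_cast; exact ZMod.natCast_rightInverse j'
  have hv : Real.exp (v ((jz : ℤ) : ZMod N)) • starDir N jz ∈ starPolygon N v :=
    mem_iUnion₂.mpr ⟨jz, Finset.mem_Icc.mpr ⟨hjz1, hjz2⟩,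
      subset_convexHull ℝ _ (Set.mem_insert_iff.mpr (Or.inr (Set.mem_insert _ _)))⟩
  have hmem := h hv
  rw [mem_smul_set_iff_inv_smul_mem₀ (ne_of_gt hC0), smul_smul] at hmem
  have hrad := radial_bound N hN w jz (by positivity) hmem
  rw [hjzc] at hrad
  have hle : Real.exp (v j') ≤ C * Real.exp (w j') := (inv_mul_le_iff₀ hC0).mp hrad
  have hlog := Real.log_le_log (Real.exp_pos _) hle
  rwa [Real.log_exp, Real.log_mul (ne_of_gt hC0) (ne_of_gt (Real.exp_pos _)),
    Real.log_exp, ← sub_le_iff_le_add] at hlog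

/-- For `N ≥ 2` and `v, w ∈ ℝ^N`, with `C ≥ 1`: `P_v ⊆ C·P_w` and `P_w ⊆ C·P_v` hold
iff `ln C ≥ |v_j − w_j|` for every `j`; consequently, the inclusion distance
`d_I(P_v, P_w) = inf{ln C : C ≥ 1, P_v ⊆ C·P_w, P_w ⊆ C·P_v}` equals `‖v − w‖_∞`,
so `v ↦ P_v` is an isometric embedding of `(ℝ^N, ‖·‖_∞)` into the star-shaped domains
of `ℝ²` with the inclusion distance. -/
theorem starPolygon_inclusion_distance (N : ℕ) (hN : 2 ≤ N) :
    (∀ v w : ZMod N → ℝ, ∀ C : ℝ, 1 ≤ C →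
      ((starPolygon N v ⊆ C • starPolygon N w ∧
        starPolygon N w ⊆ C • starPolygon N v) ↔
        ∀ j : ZMod N, |v j - w j| ≤ Real.log C)) ∧
    (∀ v w : ZMod N → ℝ,
      sInf {r : ℝ | ∃ C : ℝ, 1 ≤ C ∧ r = Real.log C ∧
          starPolygon N v ⊆ C • starPolygon N w ∧
          starPolygon N w ⊆ C • starPolygon N v} =
        ⨆ j : ZMod N, |v j - w j|) := by
  haveI : NeZero N := ⟨by omega⟩
  have hpart1 : ∀ v w : ZMod N → ℝ, ∀ C : ℝ, 1 ≤ C →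
      ((starPolygon N v ⊆ C • starPolygon N w ∧
        starPolygon N w ⊆ C • starPolygon N v) ↔
        ∀ j : ZMod N, |v j - w j| ≤ Real.log C) := by
    intro v w C hC
    constructor
    · rintro ⟨h1, h2⟩ j
      exact abs_sub_le_iff.mpr
        ⟨sub_le_log_of_incl N hN v w C hC h1 j, sub_le_log_of_incl N hN w v C hC h2 j⟩
    · intro habs
      refine ⟨incl_of_le N v w C hC fun j => ?_, incl_of_le N w v C hC fun j => ?_⟩
      · exact le_trans (le_abs_self _) (habs j)
      · exact le_trans (le_abs_self _) (by rw [abs_sub_comm]; exact habs j)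
  refine ⟨hpart1, fun v w => ?_⟩
  have hbdd : BddAbove (Set.range fun j : ZMod N => |v j - w j|) :=
    Set.Finite.bddAbove (Set.finite_range _)
  have hM : ∀ j : ZMod N, |v j - w j| ≤ ⨆ j : ZMod N, |v j - w j| :=
    fun j => le_ciSup hbdd j
  have hM0 : 0 ≤ ⨆ j : ZMod N, |v j - w j| := le_trans (abs_nonneg _) (hM 0)
  have hset : {r : ℝ | ∃ C : ℝ, 1 ≤ C ∧ r = Real.log C ∧
      starPolygon N v ⊆ C • starPolygon N w ∧
      starPolygon N w ⊆ C • starPolygon N v} = Ici (⨆ j : ZMod N, |v j - w j|) := by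
    ext r
    simp only [mem_setOf_eq, mem_Ici]
    constructor
    · rintro ⟨C, hC, rfl, h1, h2⟩
      exact ciSup_le fun j => (hpart1 v w C hC).mp ⟨h1, h2⟩ j
    · intro hr
      refine ⟨Real.exp r, Real.one_le_exp (le_trans hM0 hr), (Real.log_exp r).symm, ?_⟩
      exact (hpart1 v w (Real.exp r) (Real.one_le_exp (le_trans hM0 hr))).mpr
        (fun j => by rw [Real.log_exp]; exact le_trans (hM j) hr)
  rw [hset, csInf_Ici]
end
end

section
/- Let a : ℝ → ℝ be a smooth, 1-periodic, positive function, let T > 0, and let φ, θ : [0,T] → ℝ be C² functions satisfying the geodesic equations of the torus-of-revolution metric a(θ)²(dφ⊗dφ + dθ⊗dθ): (d/dt)(a(θ(t))² φ′(t)) = 0 and (d/dt)(a(θ(t))² θ′(t)) = a(θ(t))·a′(θ(t))·(φ′(t)² + θ′(t)²), together with the unit-speed condition a(θ(t))²(φ′(t)² + θ′(t)²) = 1 for all t ∈ [0,T]. If (φ(T) − φ(0), θ(T) − θ(0)) = (m,n) ∈ ℤ² (so that the curve descends to a closed curve on 𝕋² = ℝ²/ℤ²), then (m,n) ≠ (0,0);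 that is, every closed geodesic of such a torus of revolution is non-contractible. -/
open Set

noncomputable section

/-- If `f` has positive derivative `f'` on `[0,T]`, then `f 0 < f T`. -/
lemma aux_strict_increase (T : ℝ) (hT : 0 < T) (f f' : ℝ → ℝ)
    (hf : ∀ t ∈ Set.Icc (0 : ℝ) T, HasDerivAt f (f' t) t)
    (hpos : ∀ t ∈ Set.Icc (0 : ℝ) T, 0 < f' t) : f 0 < f T := by
  have hc : ContinuousOn f (Set.Icc 0 T) :=
    fun t ht => (hf t ht).continuousAt.continuousWithinAt
  have hmono : StrictMonoOn f (Set.Icc 0 T) := by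
    apply strictMonoOn_of_deriv_pos (convex_Icc 0 T) hc
    intro x hx
    rw [interior_Icc] at hx
    have hx' : x ∈ Set.Icc (0 : ℝ) T := Ioo_subset_Icc_self hx
    rw [(hf x hx').deriv]
    exact hpos x hx'
  exact hmono (Set.left_mem_Icc.2 hT.le) (Set.right_mem_Icc.2 hT.le) hT

/-- Every closed geodesic of a torus of revolution `(𝕋², a(θ)²(dφ² + dθ²))` is
non-contractible: if a unit-speed solution `(φ,θ)` of the geodesic (Euler–Lagrange)
equations on `[0,T]` closes up on `𝕋² = ℝ²/ℤ²` with homology class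
`(m,n) = (φ(T)−φ(0), θ(T)−θ(0)) ∈ ℤ²`, then `(m,n) ≠ (0,0)`. -/
theorem torus_of_revolution_geodesic_noncontractible
    (a : ℝ → ℝ) (ha : ContDiff ℝ (⊤ : ℕ∞) a) (haper : Function.Periodic a 1)
    (hapos : ∀ θ, 0 < a θ)
    (T : ℝ) (hT : 0 < T)
    (φ θ φ' θ' : ℝ → ℝ)
    (hφ : ∀ t ∈ Set.Icc (0 : ℝ) T, HasDerivAt φ (φ' t) t)
    (hθ : ∀ t ∈ Set.Icc (0 : ℝ) T, HasDerivAt θ (θ' t) t)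
    (hEL1 : ∀ t ∈ Set.Icc (0 : ℝ) T,
      HasDerivAt (fun s => a (θ s) ^ 2 * φ' s) 0 t)
    (hEL2 : ∀ t ∈ Set.Icc (0 : ℝ) T,
      HasDerivAt (fun s => a (θ s) ^ 2 * θ' s)
        (a (θ t) * deriv a (θ t) * (φ' t ^ 2 + θ' t ^ 2)) t)
    (hunit : ∀ t ∈ Set.Icc (0 : ℝ) T,
      a (θ t) ^ 2 * (φ' t ^ 2 + θ' t ^ 2) = 1)
    (m n : ℤ) (hm : φ T - φ 0 = m) (hn : θ T - θ 0 = n) :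
    ¬ (m = 0 ∧ n = 0) := by
  rintro ⟨rfl, rfl⟩
  push_cast at hm hn
  have hφT : φ T = φ 0 := by linarith
  have hθT : θ T = θ 0 := by linarith
  have h0T : (0 : ℝ) ∈ Set.Icc (0 : ℝ) T := Set.left_mem_Icc.2 hT.le
  -- Clairaut: g := a(θ)²φ' is constant on [0,T]
  set g : ℝ → ℝ := fun s => a (θ s) ^ 2 * φ' s with hg
  set c : ℝ := g 0 with hc
  have hgconst : ∀ t ∈ Set.Icc (0 : ℝ) T, g t = c := by
    intro t ht
    exact constant_of_has_deriv_right_zero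
      (fun s hs => (hEL1 s hs).continuousAt.continuousWithinAt)
      (fun s hs => ((hEL1 s (Set.mem_Icc_of_Ico hs)).hasDerivWithinAt)) t ht
  -- key identity: (a(θ t)² θ' t)² = a(θ t)² - c²
  set h : ℝ → ℝ := fun s => a (θ s) ^ 2 * θ' s with hhdef
  have hsq : ∀ t ∈ Set.Icc (0 : ℝ) T, h t ^ 2 = a (θ t) ^ 2 - c ^ 2 := by
    intro t ht
    have h1 := hunit t ht
    have h2 := hgconst t ht
    have hap := hapos (θ t)
    simp only [hg] at h2
    simp only [hhdef]
    calc (a (θ t) ^ 2 * θ' t) ^ 2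
        = a (θ t) ^ 2 * (a (θ t) ^ 2 * (φ' t ^ 2 + θ' t ^ 2))
          - (a (θ t) ^ 2 * φ' t) ^ 2 := by ring
      _ = a (θ t) ^ 2 - c ^ 2 := by rw [h1, h2]; ring
  rcases eq_or_ne c 0 with hc0 | hc0
  · -- c = 0 : θ strictly monotone, contradicting θ T = θ 0
    have hhne : ∀ t ∈ Set.Icc (0 : ℝ) T, h t ≠ 0 := by
      intro t ht h0
      have := hsq t ht
      rw [h0, hc0] at this
      have := hapos (θ t)
      nlinarith
    have hhcont : ContinuousOn h (Set.Icc 0 T) :=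
      fun t ht => (hEL2 t ht).continuousAt.continuousWithinAt
    have hsign : (∀ t ∈ Set.Icc (0 : ℝ) T, 0 < h t) ∨
        (∀ t ∈ Set.Icc (0 : ℝ) T, h t < 0) := by
      rcases lt_or_gt_of_ne (hhne 0 h0T) with hneg | hpos
      · right
        intro t ht
        by_contra hle
        push_neg at hle
        have hle' : 0 ≤ h t := hle
        have hsub : Set.Icc (0 : ℝ) t ⊆ Set.Icc 0 T :=
          Set.Icc_subset_Icc le_rfl ht.2
        have := intermediate_value_Icc ht.1 (hhcont.mono hsub)
        have h0mem : (0 : ℝ) ∈ Set.Icc (h 0) (h t) := ⟨hneg.le, hle'⟩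
        obtain ⟨s, hs, hs0⟩ := this h0mem
        exact hhne s (hsub hs) hs0
      · left
        intro t ht
        by_contra hle
        push_neg at hle
        have hsub : Set.Icc (0 : ℝ) t ⊆ Set.Icc 0 T :=
          Set.Icc_subset_Icc le_rfl ht.2
        have := intermediate_value_Icc' ht.1 (hhcont.mono hsub)
        have h0mem : (0 : ℝ) ∈ Set.Icc (h t) (h 0) := ⟨hle, hpos.le⟩
        obtain ⟨s, hs, hs0⟩ := this h0mem
        exact hhne s (hsub hs) hs0
    rcases hsign with hpos | hneg
    · have : θ 0 < θ T := by
        apply aux_strict_increase T hT θ θ' hθ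
        intro t ht
        have := hpos t ht
        have hap := hapos (θ t)
        simp only [hhdef] at this
        nlinarith
      linarith
    · have : (-θ) 0 < (-θ) T := by
        apply aux_strict_increase T hT (-θ) (fun t => -θ' t)
          (fun t ht => (hθ t ht).neg)
        intro t ht
        have := hneg t ht
        have hap := hapos (θ t)
        simp only [hhdef] at this
        nlinarith
      simp at this
      linarith
  · -- c ≠ 0 : φ strictly monotone, contradicting φ T = φ 0
    rcases lt_or_gt_of_ne hc0 with hneg | hpos
    · have : (-φ) 0 < (-φ) T := by
        apply aux_strict_increase T hT (-φ) (fun t => -φ' t)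
          (fun t ht => (hφ t ht).neg)
        intro t ht
        have := hgconst t ht
        simp only [hg] at this
        have hap := hapos (θ t)
        nlinarith
      simp at this
      linarith
    · have : φ 0 < φ T := by
        apply aux_strict_increase T hT φ φ' hφ
        intro t ht
        have := hgconst t ht
        simp only [hg] at this
        have hap := hapos (θ t)
        nlinarith
      linarith
end
end

section
/- Let a : ℝ → ℝ be a smooth, 1-periodic function with a(θ) ≥ 1 for all θ ∈ ℝ, and let ε ∈ (0,1). For a C¹ curve σ = (φ,θ) : [0,T] → ℝ², define its Randers length l_F(σ) := ∫₀ᵀ ( a(θ(t))·√(φ′(t)² + θ′(t)²) − ε·φ′(t) ) dt. Then every curve σ with (φ(T)−φ(0), θ(T)−θ(0)) = (m,n) ∈ ℤ² ∖ {(0,0)} (a non-contractible closed curve on 𝕋² = ℝ²/ℤ²) satisfies l_F(σ) ≥ 1 − ε. Moreover, if a(θ₀) = 1 for some θ₀, then the curve γ(t) = (t, θ₀), t ∈ [0,1], is such a closed curve with l_F(γ) = 1 − ε; hence the minimum of l_F over non-contractible closed curves equals 1 − ε. -/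
open Set intervalIntegral

noncomputable section

/-- Systolic lower bound for the Randers metric
`F = a(θ)·√(dφ² + dθ²) − ε·dφ` on `𝕋² = ℝ²/ℤ²` with `a ≥ 1` and `0 < ε < 1`:
every `C¹` closed curve with nonzero homology class `(m,n) ∈ ℤ² ∖ {0}` has Randers
length at least `1 − ε`; moreover if `a(θ₀) = 1` then the curve `γ(t) = (t, θ₀)`,
`t ∈ [0,1]`, realizes this bound, so the minimum over non-contractible closed curves
equals `1 − ε`. -/
theorem randers_systole
    (a : ℝ → ℝ) (ha : ContDiff ℝ (⊤ : ℕ∞) a) (haper : Function.Periodic a 1)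
    (hage : ∀ θ, 1 ≤ a θ)
    (ε : ℝ) (hε0 : 0 < ε) (hε1 : ε < 1) :
    (∀ T : ℝ, 0 < T → ∀ φ θ φ' θ' : ℝ → ℝ,
      (∀ t ∈ Set.Icc (0 : ℝ) T, HasDerivAt φ (φ' t) t) →
      (∀ t ∈ Set.Icc (0 : ℝ) T, HasDerivAt θ (θ' t) t) →
      ContinuousOn φ' (Set.Icc (0 : ℝ) T) →
      ContinuousOn θ' (Set.Icc (0 : ℝ) T) →
      ∀ m n : ℤ, φ T - φ 0 = m → θ T - θ 0 = n → ¬ (m = 0 ∧ n = 0) →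
      1 - ε ≤
        ∫ t in (0 : ℝ)..T,
          (a (θ t) * Real.sqrt (φ' t ^ 2 + θ' t ^ 2) - ε * φ' t)) ∧
    (∀ θ₀ : ℝ, a θ₀ = 1 →
      (∫ t in (0 : ℝ)..(1 : ℝ),
        (a θ₀ * Real.sqrt ((1 : ℝ) ^ 2 + (0 : ℝ) ^ 2) - ε * 1)) = 1 - ε) := by
  constructor
  · intro T hT φ θ φ' θ' hφ hθ hcφ hcθ m n hm hn hmn
    have huIcc : Set.uIcc (0 : ℝ) T = Set.Icc 0 T := Set.uIcc_of_le hT.le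
    set g : ℝ → ℝ := fun t => a (θ t) * Real.sqrt (φ' t ^ 2 + θ' t ^ 2) - ε * φ' t
      with hg
    have hθcont : ContinuousOn θ (Set.Icc 0 T) := fun t ht =>
      ((hθ t ht).continuousAt).continuousWithinAt
    have hgcont : ContinuousOn g (Set.Icc 0 T) := by
      apply ContinuousOn.sub
      · exact (ha.continuous.comp_continuousOn hθcont).mul
          (((hcφ.pow 2).add (hcθ.pow 2)).sqrt)
      · exact continuousOn_const.mul hcφ
    have hgint : IntervalIntegrable g MeasureTheory.volume 0 T :=
      (hgcont.mono (by rw [huIcc])).intervalIntegrable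
    have hφint : IntervalIntegrable φ' MeasureTheory.volume 0 T :=
      (hcφ.mono (by rw [huIcc])).intervalIntegrable
    have hθint : IntervalIntegrable θ' MeasureTheory.volume 0 T :=
      (hcθ.mono (by rw [huIcc])).intervalIntegrable
    have Iφ : (∫ t in (0:ℝ)..T, φ' t) = m := by
      rw [intervalIntegral.integral_eq_sub_of_hasDerivAt (fun t ht => hφ t (huIcc ▸ ht)) hφint]
      exact hm
    have Iθ : (∫ t in (0:ℝ)..T, θ' t) = n := by
      rw [intervalIntegral.integral_eq_sub_of_hasDerivAt (fun t ht => hθ t (huIcc ▸ ht)) hθint]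
      exact hn
    -- pointwise bounds
    have key : ∀ c : ℝ → ℝ, (∀ t, |c t| ≤ Real.sqrt (φ' t ^ 2 + θ' t ^ 2)) →
        ∀ t ∈ Set.Icc (0:ℝ) T, (1 - ε) * |c t| ≤ g t := by
      intro c hc t ht
      have hs : Real.sqrt (φ' t ^ 2 + θ' t ^ 2) ≥ 0 := Real.sqrt_nonneg _
      have h1 : Real.sqrt (φ' t ^ 2 + θ' t ^ 2) ≤ a (θ t) * Real.sqrt (φ' t ^ 2 + θ' t ^ 2) :=
        le_mul_of_one_le_left hs (hage _)
      have h2 : |φ' t| ≤ Real.sqrt (φ' t ^ 2 + θ' t ^ 2) := by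
        rw [← Real.sqrt_sq_eq_abs]
        exact Real.sqrt_le_sqrt (by nlinarith [sq_nonneg (θ' t)])
      have h3 : ε * φ' t ≤ ε * Real.sqrt (φ' t ^ 2 + θ' t ^ 2) := by
        have := le_trans (le_abs_self (φ' t)) h2
        nlinarith
      have h4 : (1 - ε) * |c t| ≤ (1 - ε) * Real.sqrt (φ' t ^ 2 + θ' t ^ 2) := by
        have := hc t; nlinarith
      simp only [hg]
      nlinarith
    have hφabs : ∀ t, |φ' t| ≤ Real.sqrt (φ' t ^ 2 + θ' t ^ 2) := by
      intro t; rw [← Real.sqrt_sq_eq_abs]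
      exact Real.sqrt_le_sqrt (by nlinarith [sq_nonneg (θ' t)])
    have hθabs : ∀ t, |θ' t| ≤ Real.sqrt (φ' t ^ 2 + θ' t ^ 2) := by
      intro t; rw [← Real.sqrt_sq_eq_abs]
      exact Real.sqrt_le_sqrt (by nlinarith [sq_nonneg (φ' t)])
    have main : ∀ c : ℝ → ℝ, ContinuousOn c (Set.Icc 0 T) →
        IntervalIntegrable c MeasureTheory.volume 0 T →
        (∀ t, |c t| ≤ Real.sqrt (φ' t ^ 2 + θ' t ^ 2)) →
        (1 - ε) * |∫ t in (0:ℝ)..T, c t| ≤ ∫ t in (0:ℝ)..T, g t := by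
      intro c hcc hcint hc
      have habsint : IntervalIntegrable (fun t => (1 - ε) * |c t|)
          MeasureTheory.volume 0 T :=
        ((continuousOn_const.mul hcc.abs).mono (by rw [huIcc])).intervalIntegrable
      have step1 : (∫ t in (0:ℝ)..T, (1 - ε) * |c t|) ≤ ∫ t in (0:ℝ)..T, g t :=
        intervalIntegral.integral_mono_on hT.le habsint hgint (key c hc)
      have step2 : (1 - ε) * |∫ t in (0:ℝ)..T, c t| ≤ ∫ t in (0:ℝ)..T, (1 - ε) * |c t| := by
        rw [intervalIntegral.integral_const_mul]
        have := intervalIntegral.abs_integral_le_integral_abs (μ := MeasureTheory.volume) (f := c) hT.le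
        nlinarith
      linarith
    have h1ε : (0:ℝ) < 1 - ε := by linarith
    rcases Decidable.em (m = 0) with hm0 | hm0
    · have hn0 : n ≠ 0 := fun h => hmn ⟨hm0, h⟩
      have h1 : (1:ℝ) ≤ |(n:ℝ)| := by
        rw [← Int.cast_abs]; exact_mod_cast Int.one_le_abs hn0
      have := main θ' hcθ hθint hθabs
      rw [Iθ] at this
      nlinarith
    · have h1 : (1:ℝ) ≤ |(m:ℝ)| := by
        rw [← Int.cast_abs]; exact_mod_cast Int.one_le_abs hm0
      have := main φ' hcφ hφint hφabs
      rw [Iφ] at this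
      nlinarith
  · intro θ₀ h
    simp [h, Real.sqrt_one]
end
end

section
/- Let A = conv{(−1,−1),(1,0),(0,1)} ⊂ ℝ². Then min_{m ∈ ℤ²∖{(0,0)}} max_{x ∈ A} ⟨m,x⟩ = 1 and area(A) = 3/2. Consequently the systolic ratio of the product domain 𝕋² × A, ρ = sys² / (2·area(A)) with sys = min_{m ∈ ℤ²∖{0}} max_{x∈A}⟨m,x⟩, equals 1/3; in particular it exceeds 1/4, so 𝕋² × A (the codisc bundle of a non-reversible flat Finsler metric on 𝕋²) is not systolically convex. -/
open Set

noncomputable section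

private lemma triangle_halfspace_le {x : ℝ × ℝ}
    (hx : x ∈ convexHull ℝ {((-1 : ℝ), (-1 : ℝ)), (1, 0), (0, 1)})
    (p q M : ℝ) (h1 : -p - q ≤ M) (h2 : p ≤ M) (h3 : q ≤ M) :
    p * x.1 + q * x.2 ≤ M := by
  have hlin : IsLinearMap ℝ (fun z : ℝ × ℝ => p * z.1 + q * z.2) := by
    constructor
    · intro a b; simp only [Prod.fst_add, Prod.snd_add]; ring
    · intro c a; simp only [Prod.smul_fst, Prod.smul_snd, smul_eq_mul]; ring
  have hsub : convexHull ℝ {((-1 : ℝ), (-1 : ℝ)), (1, 0), (0, 1)} ⊆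
      {z : ℝ × ℝ | p * z.1 + q * z.2 ≤ M} := by
    apply convexHull_min
    · intro v hv
      simp only [mem_insert_iff, mem_singleton_iff] at hv
      rcases hv with rfl | rfl | rfl <;> simp only [mem_setOf_eq] <;> linarith
    · exact convex_halfSpace_le hlin M
  exact hsub hx

private lemma mem_triangle {x y : ℝ} (h1 : x + y ≤ 1) (h2 : -2 * x + y ≤ 1)
    (h3 : x - 2 * y ≤ 1) :
    (x, y) ∈ convexHull ℝ {((-1 : ℝ), (-1 : ℝ)), (1, 0), (0, 1)} := by
  have h := (convex_convexHull ℝ ({((-1 : ℝ), (-1 : ℝ)), (1, 0), (0, 1)} : Set (ℝ × ℝ))).sum_mem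
    (t := (Finset.univ : Finset (Fin 3)))
    (w := ![(1 - x - y) / 3, (1 + 2 * x - y) / 3, (1 - x + 2 * y) / 3])
    (z := ![((-1 : ℝ), (-1 : ℝ)), (1, 0), (0, 1)])
    (by
      intro i _
      fin_cases i <;> simp <;> linarith)
    (by
      rw [Fin.sum_univ_three]
      simp only [Matrix.cons_val_zero, Matrix.cons_val_one, Matrix.head_cons,
        Matrix.cons_val_two, Matrix.tail_cons]
      ring)
    (by
      intro i _
      fin_cases i <;>
        exact subset_convexHull ℝ _ (by simp))
  have heq : ∑ i : Fin 3,
      (![(1 - x - y) / 3, (1 + 2 * x - y) / 3, (1 - x + 2 * y) / 3] i) •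
        (![((-1 : ℝ), (-1 : ℝ)), (1, 0), (0, 1)] i) = (x, y) := by
    rw [Fin.sum_univ_three]
    simp only [Matrix.cons_val_zero, Matrix.cons_val_one, Matrix.head_cons,
      Matrix.cons_val_two, Matrix.tail_cons, Prod.smul_mk, smul_eq_mul, Prod.mk_add_mk,
      Prod.mk.injEq]
    constructor <;> ring
  rwa [heq] at h

private lemma sSup_image_triangle (p q : ℝ) :
    sSup ((fun x : ℝ × ℝ => p * x.1 + q * x.2) ''
      convexHull ℝ {((-1 : ℝ), (-1 : ℝ)), (1, 0), (0, 1)}) = max (max (-p - q) p) q := by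
  apply IsGreatest.csSup_eq
  constructor
  · rcases max_cases (max (-p - q) p) q with ⟨h1, _⟩ | ⟨h1, _⟩
    · rcases max_cases (-p - q) p with ⟨h2, _⟩ | ⟨h2, _⟩
      · exact ⟨(-1, -1), subset_convexHull ℝ _ (by simp), by rw [h1, h2]; ring⟩
      · exact ⟨(1, 0), subset_convexHull ℝ _ (by simp), by rw [h1, h2]; ring⟩
    · exact ⟨(0, 1), subset_convexHull ℝ _ (by simp), by rw [h1]; ring⟩
  · rintro t ⟨x, hx, rfl⟩
    refine triangle_halfspace_le hx p q _ ?_ ?_ ?_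
    · exact (le_max_left _ _).trans (le_max_left _ _)
    · exact (le_max_right _ _).trans (le_max_left _ _)
    · exact le_max_right _ _

private lemma volume_graph_zero (h : ℝ → ℝ) (hm : Measurable h) :
    MeasureTheory.volume {p : ℝ × ℝ | p.2 = h p.1} = 0 := by
  rw [MeasureTheory.Measure.volume_eq_prod,
    MeasureTheory.Measure.prod_apply (measurableSet_graph hm)]
  have : ∀ x : ℝ, MeasureTheory.volume (Prod.mk x ⁻¹' {p : ℝ × ℝ | p.2 = h p.1}) = 0 := by
    intro x
    have : Prod.mk x ⁻¹' {p : ℝ × ℝ | p.2 = h p.1} = {h x} := by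
      ext y; simp [eq_comm]
    rw [this, Real.volume_singleton]
  simp only [this, MeasureTheory.lintegral_zero]

/-- For the triangle `A = conv{(−1,−1),(1,0),(0,1)} ⊂ ℝ²`: the minimum over nonzero
integer vectors `m` of the support function `max_{x∈A}⟨m,x⟩` is attained and equals
`1`, and `area(A) = 3/2`.  Hence the systolic ratio `sys²/(2·area A)` of the product
domain `𝕋² × A` equals `1/3 > 1/4`, so `𝕋² × A` is not systolically convex. -/
theorem triangle_codisc_systolic_ratio
    (A : Set (ℝ × ℝ))
    (hA : A = convexHull ℝ {((-1 : ℝ), (-1 : ℝ)), (1, 0), (0, 1)}) :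
    IsLeast
      {t : ℝ | ∃ m : ℤ × ℤ, m ≠ 0 ∧
        t = sSup ((fun x : ℝ × ℝ => (m.1 : ℝ) * x.1 + (m.2 : ℝ) * x.2) '' A)}
      1 ∧
    MeasureTheory.volume A = ENNReal.ofReal (3 / 2) ∧
    (1 : ℝ) / 4 < (1 : ℝ) ^ 2 / (2 * (MeasureTheory.volume A).toReal) := by
  subst hA
  set V : Set (ℝ × ℝ) := {((-1 : ℝ), (-1 : ℝ)), (1, 0), (0, 1)} with hV
  -- the volume computation
  set f : ℝ → ℝ := fun x => (x - 1) / 2 with hf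
  set g : ℝ → ℝ := fun x => min (2 * x + 1) (1 - x) with hg
  have hfc : Continuous f := by fun_prop
  have hgc : Continuous g := Continuous.min (by fun_prop) (by fun_prop)
  have hAS : convexHull ℝ V =
      {p : ℝ × ℝ | p.1 ∈ Icc (-1 : ℝ) 1 ∧ p.2 ∈ Icc (f p.1) (g p.1)} := by
    ext ⟨x, y⟩
    constructor
    · intro hx
      have e1 : x + y ≤ 1 := by
        have := triangle_halfspace_le hx 1 1 1 (by norm_num) le_rfl le_rfl
        linarith
      have e2 : -2 * x + y ≤ 1 := by
        have := triangle_halfspace_le hx (-2) 1 1 (by norm_num) (by norm_num) le_rfl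
        linarith
      have e3 : x - 2 * y ≤ 1 := by
        have := triangle_halfspace_le hx 1 (-2) 1 (by norm_num) le_rfl (by norm_num)
        linarith
      refine ⟨⟨by linarith, by linarith⟩, ⟨by simp only [hf]; linarith,
        le_min (by linarith) (by linarith)⟩⟩
    · rintro ⟨⟨hx1, hx2⟩, hy1, hy2⟩
      have hy2a : y ≤ 2 * x + 1 := hy2.trans (min_le_left _ _)
      have hy2b : y ≤ 1 - x := hy2.trans (min_le_right _ _)
      have hy1' : (x - 1) / 2 ≤ y := hy1
      exact mem_triangle (by linarith) (by linarith) (by linarith)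
  have hfg : ∀ x ∈ Icc (-1 : ℝ) 1, f x ≤ g x := by
    rintro x ⟨h1, h2⟩
    exact le_min (by simp only [hf]; linarith) (by simp only [hf]; linarith)
  have hreg : MeasureTheory.volume (regionBetween f g (Icc (-1 : ℝ) 1)) =
      ENNReal.ofReal (3 / 2) := by
    rw [MeasureTheory.Measure.volume_eq_prod,
      volume_regionBetween_eq_integral (hfc.integrableOn_Icc) (hgc.integrableOn_Icc)
        measurableSet_Icc hfg]
    congr 1
    have hIoc : ∫ y in Icc (-1 : ℝ) 1, (g - f) y = ∫ y in (-1 : ℝ)..1, (g - f) y := by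
      rw [intervalIntegral.integral_of_le (by norm_num),
        MeasureTheory.integral_Icc_eq_integral_Ioc]
    rw [hIoc]
    simp only [Pi.sub_apply]
    rw [← intervalIntegral.integral_add_adjacent_intervals
      (a := (-1 : ℝ)) (b := 0) (c := 1) (f := fun y => g y - f y)
      ((hgc.sub hfc).intervalIntegrable (μ := MeasureTheory.volume) _ _)
      ((hgc.sub hfc).intervalIntegrable (μ := MeasureTheory.volume) _ _)]
    have hpart1 : ∫ y in (-1 : ℝ)..0, (g y - f y) = ∫ y in (-1 : ℝ)..0, (3 / 2 * y + 3 / 2) := by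
      apply intervalIntegral.integral_congr
      intro y hy
      rw [uIcc_of_le (by norm_num)] at hy
      obtain ⟨h1, h2⟩ := hy
      have hmin : min (2 * y + 1) (1 - y) = 2 * y + 1 := min_eq_left (by linarith)
      simp only [hg, hf, hmin]
      ring
    have hpart2 : ∫ y in (0 : ℝ)..1, (g y - f y) = ∫ y in (0 : ℝ)..1, (-(3 / 2) * y + 3 / 2) := by
      apply intervalIntegral.integral_congr
      intro y hy
      rw [uIcc_of_le (by norm_num)] at hy
      obtain ⟨h1, h2⟩ := hy
      have hmin : min (2 * y + 1) (1 - y) = 1 - y := min_eq_right (by linarith)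
      simp only [hg, hf, hmin]
      ring
    rw [hpart1, hpart2]
    rw [intervalIntegral.integral_add (by apply Continuous.intervalIntegrable; fun_prop)
        (intervalIntegrable_const),
      intervalIntegral.integral_add (by apply Continuous.intervalIntegrable; fun_prop)
        (intervalIntegrable_const),
      intervalIntegral.integral_const_mul, intervalIntegral.integral_const_mul,
      integral_id, intervalIntegral.integral_const,
      intervalIntegral.integral_const]
    norm_num
  have hvol : MeasureTheory.volume (convexHull ℝ V) = ENNReal.ofReal (3 / 2) := by
    rw [hAS]
    set S : Set (ℝ × ℝ) := {p : ℝ × ℝ | p.1 ∈ Icc (-1 : ℝ) 1 ∧ p.2 ∈ Icc (f p.1) (g p.1)}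
      with hS
    have hsub1 : regionBetween f g (Icc (-1 : ℝ) 1) ⊆ S := by
      rintro ⟨x, y⟩ ⟨hx, hy⟩
      exact ⟨hx, le_of_lt hy.1, le_of_lt hy.2⟩
    have hsub2 : S ⊆ regionBetween f g (Icc (-1 : ℝ) 1) ∪
        ({p : ℝ × ℝ | p.2 = f p.1} ∪ {p : ℝ × ℝ | p.2 = g p.1}) := by
      rintro ⟨x, y⟩ ⟨hx, hy1, hy2⟩
      rcases eq_or_lt_of_le hy1 with h | h
      · exact Or.inr (Or.inl h.symm)
      · rcases eq_or_lt_of_le hy2 with h' | h'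
        · exact Or.inr (Or.inr h')
        · exact Or.inl ⟨hx, h, h'⟩
    have hnull : MeasureTheory.volume
        ({p : ℝ × ℝ | p.2 = f p.1} ∪ {p : ℝ × ℝ | p.2 = g p.1}) = 0 := by
      apply MeasureTheory.measure_union_null
      · exact volume_graph_zero f hfc.measurable
      · exact volume_graph_zero g hgc.measurable
    apply le_antisymm
    · calc MeasureTheory.volume S
          ≤ MeasureTheory.volume (regionBetween f g (Icc (-1 : ℝ) 1) ∪
            ({p : ℝ × ℝ | p.2 = f p.1} ∪ {p : ℝ × ℝ | p.2 = g p.1})) :=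
            MeasureTheory.measure_mono hsub2
        _ ≤ MeasureTheory.volume (regionBetween f g (Icc (-1 : ℝ) 1)) +
            MeasureTheory.volume ({p : ℝ × ℝ | p.2 = f p.1} ∪ {p : ℝ × ℝ | p.2 = g p.1}) :=
            MeasureTheory.measure_union_le _ _
        _ = ENNReal.ofReal (3 / 2) := by rw [hreg, hnull, add_zero]
    · rw [← hreg]
      exact MeasureTheory.measure_mono hsub1
  refine ⟨⟨?_, ?_⟩, hvol, ?_⟩
  · refine ⟨(1, 0), by simp, ?_⟩
    have := sSup_image_triangle 1 0
    rw [hV]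
    push_cast
    rw [this]
    norm_num
  · rintro t ⟨⟨p, q⟩, hm, rfl⟩
    rw [hV, sSup_image_triangle]
    have hz : ¬(p = 0 ∧ q = 0) := by
      intro ⟨hp, hq⟩
      exact hm (by simp [Prod.ext_iff, hp, hq])
    have hcase : 1 ≤ p ∨ 1 ≤ q ∨ 1 ≤ -p - q := by omega
    rcases hcase with h | h | h
    · have : (1 : ℝ) ≤ (p : ℝ) := by exact_mod_cast h
      exact this.trans ((le_max_right _ _).trans (le_max_left _ _))
    · have : (1 : ℝ) ≤ (q : ℝ) := by exact_mod_cast h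
      exact this.trans (le_max_right _ _)
    · have : (1 : ℝ) ≤ -(p : ℝ) - (q : ℝ) := by
        have : ((1 : ℤ) : ℝ) ≤ ((-p - q : ℤ) : ℝ) := by exact_mod_cast h
        push_cast at this
        linarith
      exact this.trans ((le_max_left _ _).trans (le_max_left _ _))
  · rw [hvol, ENNReal.toReal_ofReal (by norm_num)]
    norm_num
end
end
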